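/- In a complete market with pricing kernel M ∈ L²(P), M > 0 a.s. and Var(M) > 0, the maximal mean-variance utility max{U_θ(X) : X ∈ L², E[MX] = x₀} and the maximal monotone mean-variance utility max{V_θ(X) : X ∈ L², E[MX] = x₀} are equal, both being x₀/m₁ + m₂/(2θ m₁²) where m₁ = E[M], m₂ = Var(M). -/

import Mathlib

open MeasureTheory ProbabilityTheory

private lemma mul_integrable_of_memL2 {Ω : Type*} [MeasurableSpace Ω] {P : Measure Ω}
    {f g : Ω → ℝ} (hf : MemLp f 2 P) (hg : MemLp g 2 P) :
    Integrable (fun ω => f ω * g ω) P := by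
  have h := ((hf.add hg).integrable_sq.sub hf.integrable_sq).sub hg.integrable_sq
  have heq : (fun ω => f ω * g ω)
      = fun ω => (((f ω + g ω) ^ 2 - f ω ^ 2) - g ω ^ 2) / 2 := funext fun ω => by ring
  rw [heq]
  exact h.div_const 2

private lemma expand6 {Ω : Type*} [MeasurableSpace Ω] (P : Measure Ω) [IsProbabilityMeasure P]
    {f g : Ω → ℝ} (hf : MemLp f 2 P) (hg : MemLp g 2 P) (a b e k m l : ℝ) :
    ∫ ω, (a * f ω + b * g ω + e * (f ω * g ω) + k * g ω ^ 2 + m * f ω ^ 2 + l) ∂P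
      = a * (∫ ω, f ω ∂P) + b * (∫ ω, g ω ∂P) + e * (∫ ω, f ω * g ω ∂P)
        + k * (∫ ω, g ω ^ 2 ∂P) + m * (∫ ω, f ω ^ 2 ∂P) + l := by
  have h1 : Integrable (fun ω => a * f ω) P := (hf.integrable one_le_two).const_mul a
  have h2 : Integrable (fun ω => b * g ω) P := (hg.integrable one_le_two).const_mul b
  have h3 : Integrable (fun ω => e * (f ω * g ω)) P :=
    (mul_integrable_of_memL2 hf hg).const_mul e
  have h4 : Integrable (fun ω => k * g ω ^ 2) P := hg.integrable_sq.const_mul k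
  have h5 : Integrable (fun ω => m * f ω ^ 2) P := hf.integrable_sq.const_mul m
  have h12 : Integrable (fun ω => a * f ω + b * g ω) P := h1.add h2
  have h123 : Integrable (fun ω => a * f ω + b * g ω + e * (f ω * g ω)) P := h12.add h3
  have h1234 : Integrable (fun ω => a * f ω + b * g ω + e * (f ω * g ω) + k * g ω ^ 2) P :=
    h123.add h4
  have h12345 : Integrable
      (fun ω => a * f ω + b * g ω + e * (f ω * g ω) + k * g ω ^ 2 + m * f ω ^ 2) P := h1234.add h5
  rw [integral_add h12345 (integrable_const l), integral_add h1234 h5, integral_add h123 h4,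
      integral_add h12 h3, integral_add h1 h2, integral_const_mul, integral_const_mul,
      integral_const_mul, integral_const_mul, integral_const_mul, integral_const]
  simp [measure_univ]

private lemma alg1 (θ m₁ m₂ x₀ μ v : ℝ) (hθ : 0 < θ) (hm₁ : 0 < m₁)
    (h : 0 ≤ θ ^ 2 * m₁ ^ 2 * v + 2 * θ * m₁ * (x₀ - m₁ * μ) + m₂) :
    μ - θ / 2 * v ≤ x₀ / m₁ + m₂ / (2 * θ * m₁ ^ 2) := by
  rw [← sub_nonneg]
  have h2 : (0:ℝ) < 2 * θ * m₁ ^ 2 := by positivity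
  have hid : x₀ / m₁ + m₂ / (2 * θ * m₁ ^ 2) - (μ - θ / 2 * v)
      = (θ ^ 2 * m₁ ^ 2 * v + 2 * θ * m₁ * (x₀ - m₁ * μ) + m₂) / (2 * θ * m₁ ^ 2) := by
    field_simp
    ring
  rw [hid]
  exact div_nonneg h h2.le

set_option maxHeartbeats 2000000 in
/-- In a complete market with pricing kernel `M ∈ L²`, `M > 0` a.s., `Var(M) > 0`,
the maximal mean-variance utility and the maximal monotone mean-variance utility over
all `X ∈ L²` with `E[M X] = x₀` coincide, both equal to `x₀/m₁ + m₂/(2θ m₁²)`. -/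
theorem stmt_7 {Ω : Type*} [MeasurableSpace Ω] (P : Measure Ω) [IsProbabilityMeasure P]
    (M : Ω → ℝ) (hM2 : MemLp M 2 P) (hMpos : ∀ᵐ ω ∂P, 0 < M ω)
    (m₁ m₂ x₀ θ : ℝ)
    (hm₁ : ∫ ω, M ω ∂P = m₁) (hm₁pos : 0 < m₁)
    (hm₂ : variance M P = m₂) (hm₂pos : 0 < m₂) (hθ : 0 < θ) :
    sSup {u : ℝ | ∃ X : Ω → ℝ, MemLp X 2 P ∧ (∫ ω, M ω * X ω ∂P = x₀) ∧
        u = (∫ ω, X ω ∂P) - θ / 2 * variance X P}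
      = x₀ / m₁ + m₂ / (2 * θ * m₁ ^ 2) ∧
    sSup {v : ℝ | ∃ X : Ω → ℝ, MemLp X 2 P ∧ (∫ ω, M ω * X ω ∂P = x₀) ∧
        v = sInf {r : ℝ | ∃ Y : Ω → ℝ, MemLp Y 2 P ∧ (∀ᵐ ω ∂P, 0 ≤ Y ω) ∧
            (∫ ω, Y ω ∂P = 1) ∧
            r = ∫ ω, (X ω * Y ω + (Y ω) ^ 2 / (2 * θ) - 1 / (2 * θ)) ∂P}}
      = x₀ / m₁ + m₂ / (2 * θ * m₁ ^ 2) := by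
  have hθ' : θ ≠ 0 := hθ.ne'
  have hm₁' : m₁ ≠ 0 := hm₁pos.ne'
  -- second moment of M
  have hIM2 : ∫ ω, M ω ^ 2 ∂P = m₂ + m₁ ^ 2 := by
    have h := variance_eq_sub hM2
    simp only [Pi.pow_apply] at h
    rw [hm₁, hm₂] at h
    linarith
  obtain ⟨T, hTdef⟩ : ∃ T : ℝ, T = x₀ / m₁ + m₂ / (2 * θ * m₁ ^ 2) := ⟨_, rfl⟩
  obtain ⟨c, hc⟩ : ∃ c : ℝ, c = 1 / (θ * m₁) := ⟨_, rfl⟩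
  obtain ⟨d, hd⟩ : ∃ d : ℝ, d = x₀ / m₁ + m₂ / (θ * m₁ ^ 2) + 1 / θ := ⟨_, rfl⟩
  obtain ⟨Xs, hXs⟩ : ∃ Xs : Ω → ℝ, Xs = fun ω => d - c * M ω := ⟨_, rfl⟩
  rw [← hTdef]
  have hXs2 : MemLp Xs 2 P := by
    rw [hXs]; exact (memLp_const d).sub (hM2.const_mul c)
  have hXsbud : ∫ ω, M ω * Xs ω ∂P = x₀ := by
    have heq : (fun ω => M ω * Xs ω)
        = fun ω => (d : ℝ) * M ω + 0 * M ω + 0 * (M ω * M ω) + 0 * M ω ^ 2 + (-c) * M ω ^ 2 + 0 :=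
      funext fun ω => by simp only [hXs]; ring
    rw [heq, expand6 P hM2 hM2, hm₁, hIM2, hc, hd]
    field_simp
    ring
  have hIXs : ∫ ω, Xs ω ∂P = d - c * m₁ := by
    have heq : (fun ω => Xs ω)
        = fun ω => (-c) * M ω + 0 * M ω + 0 * (M ω * M ω) + 0 * M ω ^ 2 + 0 * M ω ^ 2 + d :=
      funext fun ω => by simp only [hXs]; ring
    rw [heq, expand6 P hM2 hM2, hm₁]
    ring
  have hIXs2 : ∫ ω, Xs ω ^ 2 ∂P = d ^ 2 - 2 * d * c * m₁ + c ^ 2 * (m₂ + m₁ ^ 2) := by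
    have heq : (fun ω => Xs ω ^ 2)
        = fun ω => (-(2 * d * c)) * M ω + 0 * M ω + 0 * (M ω * M ω) + 0 * M ω ^ 2
            + c ^ 2 * M ω ^ 2 + d ^ 2 :=
      funext fun ω => by simp only [hXs]; ring
    rw [heq, expand6 P hM2 hM2, hm₁, hIM2]
    ring
  have hVXs : variance Xs P = c ^ 2 * m₂ := by
    have h := variance_eq_sub hXs2
    simp only [Pi.pow_apply] at h
    rw [h, hIXs2, hIXs]
    ring
  have hXsval : T = (∫ ω, Xs ω ∂P) - θ / 2 * variance Xs P := by
    rw [hIXs, hVXs, hTdef, hc, hd]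
    field_simp
    ring
  refine ⟨?_, ?_⟩
  · -- mean-variance part
    have hub : ∀ u ∈ {u : ℝ | ∃ X : Ω → ℝ, MemLp X 2 P ∧ (∫ ω, M ω * X ω ∂P = x₀) ∧
        u = (∫ ω, X ω ∂P) - θ / 2 * variance X P}, u ≤ T := by
      rintro u ⟨X, hX2, hbud, rfl⟩
      have hbud' : ∫ ω, X ω * M ω ∂P = x₀ := by
        rw [← hbud]
        exact integral_congr_ae (Filter.Eventually.of_forall fun ω => mul_comm _ _)
      have hvar : variance X P = (∫ ω, X ω ^ 2 ∂P) - (∫ ω, X ω ∂P) ^ 2 := by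
        have h := variance_eq_sub hX2
        simp only [Pi.pow_apply] at h
        exact h
      obtain ⟨μX, hμX⟩ : ∃ μX : ℝ, μX = ∫ ω, X ω ∂P := ⟨_, rfl⟩
      have h0 : (0:ℝ) ≤ ∫ ω, ((θ * m₁) * X ω + 1 * M ω + 0 * (X ω * M ω) + 0 * M ω ^ 2
          + 0 * X ω ^ 2 + (-(θ * m₁ * μX) - m₁)) ^ 2 ∂P :=
        integral_nonneg fun ω => sq_nonneg _
      have heq : (fun ω => ((θ * m₁) * X ω + 1 * M ω + 0 * (X ω * M ω) + 0 * M ω ^ 2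
          + 0 * X ω ^ 2 + (-(θ * m₁ * μX) - m₁)) ^ 2)
          = fun ω => (-(2 * θ * m₁ * (θ * m₁ * μX + m₁))) * X ω
              + (-(2 * (θ * m₁ * μX + m₁))) * M ω + (2 * θ * m₁) * (X ω * M ω)
              + 1 * M ω ^ 2 + (θ * m₁) ^ 2 * X ω ^ 2 + (θ * m₁ * μX + m₁) ^ 2 :=
        funext fun ω => by ring
      rw [heq, expand6 P hX2 hM2, hbud', hm₁, hIM2, ← hμX] at h0
      rw [hTdef, hvar, ← hμX]
      exact alg1 θ m₁ m₂ x₀ μX _ hθ hm₁pos (by nlinarith [h0])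
    have hmem : T ∈ {u : ℝ | ∃ X : Ω → ℝ, MemLp X 2 P ∧ (∫ ω, M ω * X ω ∂P = x₀) ∧
        u = (∫ ω, X ω ∂P) - θ / 2 * variance X P} := ⟨Xs, hXs2, hXsbud, hXsval⟩
    exact le_antisymm (csSup_le ⟨T, hmem⟩ hub) (le_csSup ⟨T, hub⟩ hmem)
  · -- monotone mean-variance part
    have hbdd : ∀ X : Ω → ℝ, MemLp X 2 P →
        BddBelow {r : ℝ | ∃ Y : Ω → ℝ, MemLp Y 2 P ∧ (∀ᵐ ω ∂P, 0 ≤ Y ω) ∧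
            (∫ ω, Y ω ∂P = 1) ∧
            r = ∫ ω, (X ω * Y ω + (Y ω) ^ 2 / (2 * θ) - 1 / (2 * θ)) ∂P} := by
      intro X hX2
      refine ⟨∫ ω, (-(θ / 2) * X ω ^ 2 - 1 / (2 * θ)) ∂P, ?_⟩
      rintro r ⟨Y, hY2, hYpos, hYint, rfl⟩
      apply integral_mono
      · exact (hX2.integrable_sq.const_mul _).sub (integrable_const _)
      · exact ((mul_integrable_of_memL2 hX2 hY2).add (hY2.integrable_sq.div_const _)).sub
          (integrable_const _)
      · intro ω
        have hpos : (0:ℝ) ≤ (θ * X ω + Y ω) ^ 2 / (2 * θ) := by positivity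
        have hide : (θ * X ω + Y ω) ^ 2 / (2 * θ)
            = X ω * Y ω + Y ω ^ 2 / (2 * θ) - (-(θ / 2) * X ω ^ 2) := by
          field_simp
          ring
        show -(θ / 2) * X ω ^ 2 - 1 / (2 * θ)
            ≤ X ω * Y ω + (Y ω) ^ 2 / (2 * θ) - 1 / (2 * θ)
        linarith
    -- for every admissible X, T belongs to the inner set (via Y = M/m₁)
    have hTmem : ∀ X : Ω → ℝ, MemLp X 2 P → (∫ ω, M ω * X ω ∂P = x₀) →
        T ∈ {r : ℝ | ∃ Y : Ω → ℝ, MemLp Y 2 P ∧ (∀ᵐ ω ∂P, 0 ≤ Y ω) ∧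
            (∫ ω, Y ω ∂P = 1) ∧
            r = ∫ ω, (X ω * Y ω + (Y ω) ^ 2 / (2 * θ) - 1 / (2 * θ)) ∂P} := by
      intro X hX2 hbud
      refine ⟨fun ω => M ω / m₁, ?_, ?_, ?_, ?_⟩
      · have := hM2.const_mul m₁⁻¹
        simpa [div_eq_inv_mul] using this
      · filter_upwards [hMpos] with ω h
        positivity
      · rw [integral_div, hm₁, div_self hm₁']
      · show T = ∫ ω, (X ω * (M ω / m₁) + (M ω / m₁) ^ 2 / (2 * θ) - 1 / (2 * θ)) ∂P
        have heq : (fun ω => X ω * (M ω / m₁) + (M ω / m₁) ^ 2 / (2 * θ) - 1 / (2 * θ))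
            = fun ω => 0 * M ω + 0 * X ω + (1 / m₁) * (M ω * X ω) + 0 * X ω ^ 2
                + (1 / (2 * θ * m₁ ^ 2)) * M ω ^ 2 + (-(1 / (2 * θ))) :=
          funext fun ω => by ring
        rw [heq, expand6 P hM2 hX2, hbud, hIM2, hm₁, hTdef]
        field_simp
        ring
    -- T is a lower bound of the inner set for Xs
    have hlow : ∀ r ∈ {r : ℝ | ∃ Y : Ω → ℝ, MemLp Y 2 P ∧ (∀ᵐ ω ∂P, 0 ≤ Y ω) ∧
        (∫ ω, Y ω ∂P = 1) ∧
        r = ∫ ω, (Xs ω * Y ω + (Y ω) ^ 2 / (2 * θ) - 1 / (2 * θ)) ∂P}, T ≤ r := by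
      rintro r ⟨Y, hY2, hYpos, hYint, rfl⟩
      have heq : (fun ω => Xs ω * Y ω + (Y ω) ^ 2 / (2 * θ) - 1 / (2 * θ))
          = fun ω => 0 * M ω + d * Y ω + (-c) * (M ω * Y ω) + (1 / (2 * θ)) * Y ω ^ 2
              + 0 * M ω ^ 2 + (-(1 / (2 * θ))) :=
        funext fun ω => by simp only [hXs]; ring
      rw [heq, expand6 P hM2 hY2, hYint, hm₁, hIM2]
      obtain ⟨IMY, hIMY⟩ : ∃ z : ℝ, z = ∫ ω, M ω * Y ω ∂P := ⟨_, rfl⟩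
      obtain ⟨IY2, hIY2⟩ : ∃ z : ℝ, z = ∫ ω, Y ω ^ 2 ∂P := ⟨_, rfl⟩
      rw [← hIMY, ← hIY2]
      have h0 : (0:ℝ) ≤ ∫ ω, (0 * M ω + 0 * Y ω + (-(2 / m₁)) * (M ω * Y ω) + 1 * Y ω ^ 2
          + (1 / m₁ ^ 2) * M ω ^ 2 + 0) ∂P := by
        have heq2 : (fun ω => 0 * M ω + 0 * Y ω + (-(2 / m₁)) * (M ω * Y ω) + 1 * Y ω ^ 2
            + (1 / m₁ ^ 2) * M ω ^ 2 + 0)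
            = fun ω => (Y ω - M ω / m₁) ^ 2 := funext fun ω => by ring
        rw [heq2]
        exact integral_nonneg fun ω => sq_nonneg _
      rw [expand6 P hM2 hY2, hIM2, ← hIMY, ← hIY2] at h0
      have h1 : (0:ℝ) ≤ (IY2 - (2 / m₁) * IMY + (m₂ + m₁ ^ 2) / m₁ ^ 2) / (2 * θ) := by
        apply div_nonneg _ (by positivity)
        have h := h0
        ring_nf at h ⊢
        linarith
      have hid : 0 * m₁ + d * 1 + -c * IMY + 1 / (2 * θ) * IY2 + 0 * (m₂ + m₁ ^ 2)
            + -(1 / (2 * θ)) - T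
          = (IY2 - (2 / m₁) * IMY + (m₂ + m₁ ^ 2) / m₁ ^ 2) / (2 * θ) := by
        rw [hTdef, hc, hd]
        field_simp
        ring
      rw [← sub_nonneg, hid]
      exact h1
    have hub : ∀ v ∈ {v : ℝ | ∃ X : Ω → ℝ, MemLp X 2 P ∧ (∫ ω, M ω * X ω ∂P = x₀) ∧
        v = sInf {r : ℝ | ∃ Y : Ω → ℝ, MemLp Y 2 P ∧ (∀ᵐ ω ∂P, 0 ≤ Y ω) ∧
            (∫ ω, Y ω ∂P = 1) ∧
            r = ∫ ω, (X ω * Y ω + (Y ω) ^ 2 / (2 * θ) - 1 / (2 * θ)) ∂P}}, v ≤ T := by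
      rintro v ⟨X, hX2, hbud, rfl⟩
      exact csInf_le (hbdd X hX2) (hTmem X hX2 hbud)
    have hmem : T ∈ {v : ℝ | ∃ X : Ω → ℝ, MemLp X 2 P ∧ (∫ ω, M ω * X ω ∂P = x₀) ∧
        v = sInf {r : ℝ | ∃ Y : Ω → ℝ, MemLp Y 2 P ∧ (∀ᵐ ω ∂P, 0 ≤ Y ω) ∧
            (∫ ω, Y ω ∂P = 1) ∧
            r = ∫ ω, (X ω * Y ω + (Y ω) ^ 2 / (2 * θ) - 1 / (2 * θ)) ∂P}} := by
      refine ⟨Xs, hXs2, hXsbud, ?_⟩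
      exact (le_antisymm (csInf_le (hbdd Xs hXs2) (hTmem Xs hXs2 hXsbud))
        (le_csInf ⟨T, hTmem Xs hXs2 hXsbud⟩ hlow)).symm
    exact le_antisymm (csSup_le ⟨T, hmem⟩ hub) (le_csSup ⟨T, hub⟩ hmem)
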